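/- arXiv:math-ph/0510019 — 3 statements merged into one kernel-verified Lean document; each statement's English description precedes it below -/
import Mathlib

section
/- Let σ and σ̂ be two finite positive Borel measures on ℝ with compact support, mutually absolutely continuous with dσ̂ = f dσ where (1+ε)^{-1} ≤ f ≤ 1+ε. Let p_s and p̂_s denote the off-diagonal (recurrence) coefficients of the Jacobi matrices obtained by orthogonalizing polynomials with respect to σ and σ̂. Then |p̂_s − p_s| ≤ ε p_s for all s ≥ 0. -/
/-!
If `γ_s > 0` is the leading coefficient of the `s`-th orthonormal polynomial, comparing the
coefficients of `x^(s+1)` in the recurrence gives `γ_{s-1} = p_s γ_s`. Bessel's inequality for the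
orthonormal system of `σ̂` (the extremal property of monic orthogonal polynomials) gives
`(γ_s / γ̂_s)² ≤ ∫ P_s² dσ̂ ≤ (1 + ε) ∫ P_s² dσ = 1 + ε`, and symmetrically with `σ` and `σ̂`
exchanged, since `σ̂ ≤ (1 + ε) σ` and `σ ≤ (1 + ε) σ̂` as measures. Combining these bounds at
`s - 1` and `s` yields `(1 + ε)⁻¹ p_s ≤ p̂_s ≤ (1 + ε) p_s`.
-/

open MeasureTheory Polynomial

theorem Polynomial.degree_sub_C_mul_lt {K : Type*} [Field K] {P Q : K[X]} {n : ℕ}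
    (hP : P.natDegree = n) (hP0 : P ≠ 0) (hQ : Q.degree < ↑(n + 1)) :
    (Q - C (Q.coeff n / P.leadingCoeff) * P).degree < n := by
  rw [degree_lt_iff_coeff_zero] at hQ ⊢
  intro m hm
  rcases hm.eq_or_lt with rfl | hm
  · have : P.coeff n ≠ 0 := hP ▸ leadingCoeff_ne_zero.2 hP0
    simp [leadingCoeff, hP, this]
  · simp [hQ m hm, coeff_eq_zero_of_natDegree_lt (hP ▸ hm)]

theorem Polynomial.leadingCoeff_eq_mul_of_X_mul_eq {R : Type*} [Semiring R] {A B D : R[X]}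
    {c : R} {k : ℕ} (h : X * A = B + C c * D) (hA : A.natDegree = k) (hB : B.natDegree ≤ k)
    (hD : D.natDegree = k + 1) : A.leadingCoeff = c * D.leadingCoeff := by
  have := congrArg (coeff · (k + 1)) h
  simpa [coeff_X_mul, coeff_eq_zero_of_natDegree_lt (hB.trans_lt k.lt_succ_self),
    leadingCoeff, hA, hD] using this

theorem leadingCoeff_eq_mul_leadingCoeff_succ {P : ℕ → ℝ[X]} {p q : ℕ → ℝ}
    (hdeg : ∀ k, (P k).natDegree = k)
    (hrec0 : ∀ x : ℝ, x * (P 0).eval x = q 0 * (P 0).eval x + p 1 * (P 1).eval x)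
    (hrec : ∀ k, 1 ≤ k → ∀ x : ℝ,
      x * (P k).eval x = p k * (P (k - 1)).eval x + q k * (P k).eval x
        + p (k + 1) * (P (k + 1)).eval x)
    (k : ℕ) : (P k).leadingCoeff = p (k + 1) * (P (k + 1)).leadingCoeff := by
  cases k with
  | zero =>
    refine leadingCoeff_eq_mul_of_X_mul_eq (B := C (q 0) * P 0) ?_ (hdeg 0)
      (natDegree_C_mul_le _ _ |>.trans (hdeg 0).le) (hdeg 1)
    exact Polynomial.funext fun x => by simpa using hrec0 x
  | succ k =>
    refine leadingCoeff_eq_mul_of_X_mul_eq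
      (B := C (p (k + 1)) * P k + C (q (k + 1)) * P (k + 1)) ?_ (hdeg (k + 1)) ?_ (hdeg (k + 2))
    · exact Polynomial.funext fun x => by simpa using hrec (k + 1) (by omega) x
    · refine natDegree_add_le_of_degree_le ?_ ?_
      · exact (natDegree_C_mul_le _ _).trans ((hdeg k).trans_le k.le_succ)
      · exact (natDegree_C_mul_le _ _).trans (hdeg (k + 1)).le

theorem sq_integral_mul_le_integral_sq {α : Type*} [MeasurableSpace α] {μ : Measure α}
    {g h : α → ℝ} (hgg : Integrable (fun x => g x ^ 2) μ) (hgh : Integrable (fun x => g x * h x) μ)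
    (hhh : Integrable (fun x => h x ^ 2) μ) (h1 : ∫ x, h x ^ 2 ∂μ = 1) :
    (∫ x, g x * h x ∂μ) ^ 2 ≤ ∫ x, g x ^ 2 ∂μ := by
  set t := ∫ x, g x * h x ∂μ
  have hexp : ∫ x, (g x - t * h x) ^ 2 ∂μ = ∫ x, g x ^ 2 ∂μ - t ^ 2 := by
    have hsq : ∀ x, (g x - t * h x) ^ 2 = g x ^ 2 - (2 * t * (g x * h x) - t ^ 2 * h x ^ 2) :=
      fun x => by ring
    simp_rw [hsq]
    have hrest : Integrable (fun x => 2 * t * (g x * h x) - t ^ 2 * h x ^ 2) μ :=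
      (hgh.const_mul _).sub (hhh.const_mul _)
    rw [integral_sub hgg hrest,
      integral_sub (hgh.const_mul _) (hhh.const_mul _), integral_const_mul, integral_const_mul, h1]
    ring
  have := hexp ▸ integral_nonneg fun x => sq_nonneg (g x - t * h x)
  linarith

theorem Continuous.integrable_of_measure_abs_gt_eq_zero {μ : Measure ℝ} [IsFiniteMeasure μ]
    {R : ℝ} (hμ : μ {x | R < |x|} = 0) {g : ℝ → ℝ} (hg : Continuous g) : Integrable g μ := by
  have h : ∀ᵐ x ∂μ, x ∈ Set.Icc (-R) R := by
    filter_upwards [measure_eq_zero_iff_ae_notMem.mp hμ] with x hx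
    simpa [Set.mem_Icc, ← abs_le] using hx
  rw [← Measure.restrict_eq_self_of_ae_mem h]
  exact hg.continuousOn.integrableOn_compact isCompact_Icc

theorem withDensity_ofReal_le_smul {α : Type*} [MeasurableSpace α] {μ : Measure α}
    {f : α → ℝ} {M : ℝ} (h : ∀ x, f x ≤ M) :
    μ.withDensity (fun x => ENNReal.ofReal (f x)) ≤ ENNReal.ofReal M • μ := by
  rw [← withDensity_const]
  exact withDensity_mono (ae_of_all _ fun x => ENNReal.ofReal_le_ofReal (h x))

theorem le_smul_withDensity_ofReal {α : Type*} [MeasurableSpace α] {μ : Measure α}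
    {f : α → ℝ} {m : ℝ} (hm : 0 < m) (h : ∀ x, m ≤ f x) :
    μ ≤ ENNReal.ofReal m⁻¹ • μ.withDensity (fun x => ENNReal.ofReal (f x)) := by
  rw [← withDensity_smul' _ _ ENNReal.ofReal_ne_top]
  conv_lhs => rw [← withDensity_one (μ := μ)]
  refine withDensity_mono (ae_of_all _ fun x => ?_)
  rw [Pi.one_apply, Pi.smul_apply, smul_eq_mul, ← ENNReal.ofReal_mul (by positivity),
    ENNReal.one_le_ofReal]
  exact (one_le_inv_mul₀ hm).2 (h x)

def HasFiniteMoments (μ : Measure ℝ) : Prop :=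
  ∀ g : ℝ[X], Integrable (fun x => g.eval x) μ

structure IsOrthonormalPolys (μ : Measure ℝ) (P : ℕ → ℝ[X]) : Prop where
  natDegree_eq : ∀ k, (P k).natDegree = k
  leadingCoeff_pos : ∀ k, 0 < (P k).leadingCoeff
  integral_eval_mul_eval : ∀ j k, ∫ x, (P j).eval x * (P k).eval x ∂μ = if j = k then 1 else 0

theorem integral_eval_sub_C_mul_mul {μ : Measure ℝ}
    (hμ : HasFiniteMoments μ) (Q G g : ℝ[X]) (c : ℝ) :
    ∫ x, (Q - C c * G).eval x * g.eval x ∂μ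
      = ∫ x, Q.eval x * g.eval x ∂μ - c * ∫ x, G.eval x * g.eval x ∂μ := by
  have hint : ∀ A : ℝ[X], Integrable (fun x => A.eval x * g.eval x) μ := fun A => by
    simpa using hμ (A * g)
  simp only [eval_sub, eval_mul, eval_C, sub_mul, mul_assoc]
  rw [integral_sub (hint Q) ((hint G).const_mul c), integral_const_mul]

namespace IsOrthonormalPolys

variable {μ : Measure ℝ} {P : ℕ → ℝ[X]}

theorem integral_eval_sub_C_mul_mul (hP : IsOrthonormalPolys μ P) (hμ : HasFiniteMoments μ)
    (Q : ℝ[X]) (n s : ℕ) :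
    ∫ x, (Q - C (Q.coeff n / (P n).leadingCoeff) * P n).eval x * (P s).eval x ∂μ
      = ∫ x, Q.eval x * (P s).eval x ∂μ - if n = s then Q.coeff n / (P n).leadingCoeff else 0 := by
  rw [_root_.integral_eval_sub_C_mul_mul hμ, hP.integral_eval_mul_eval]
  split_ifs <;> simp

theorem integral_mul_eq_zero_of_degree_lt (hP : IsOrthonormalPolys μ P) (hμ : HasFiniteMoments μ)
    {Q : ℝ[X]} {s : ℕ} (hQ : Q.degree < s) :
    ∫ x, Q.eval x * (P s).eval x ∂μ = 0 := by
  suffices h : ∀ n ≤ s, ∀ Q : ℝ[X], Q.degree < n → ∫ x, Q.eval x * (P s).eval x ∂μ = 0 from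
    h s le_rfl Q hQ
  intro n
  induction n with
  | zero =>
    intro _ Q hQ
    obtain rfl : Q = 0 := by simpa [Nat.WithBot.lt_zero_iff, degree_eq_bot] using hQ
    simp
  | succ n ih =>
    intro hn Q hQ
    have hR := ih (by omega) _ (degree_sub_C_mul_lt (hP.natDegree_eq n)
      (leadingCoeff_ne_zero.1 (hP.leadingCoeff_pos n).ne') hQ)
    rwa [hP.integral_eval_sub_C_mul_mul hμ, if_neg (by omega), sub_zero] at hR

theorem integral_mul_eq_coeff_div (hP : IsOrthonormalPolys μ P) (hμ : HasFiniteMoments μ)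
    {Q : ℝ[X]} {s : ℕ} (hQ : Q.natDegree ≤ s) :
    ∫ x, Q.eval x * (P s).eval x ∂μ = Q.coeff s / (P s).leadingCoeff := by
  have hR := hP.integral_mul_eq_zero_of_degree_lt hμ (degree_sub_C_mul_lt (hP.natDegree_eq s)
    (leadingCoeff_ne_zero.1 (hP.leadingCoeff_pos s).ne')
    ((degree_le_of_natDegree_le hQ).trans_lt (by exact_mod_cast s.lt_succ_self)))
  rw [hP.integral_eval_sub_C_mul_mul hμ, if_pos rfl] at hR
  linarith

theorem sq_coeff_div_le_integral_sq (hP : IsOrthonormalPolys μ P) (hμ : HasFiniteMoments μ)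
    {Q : ℝ[X]} {s : ℕ} (hQ : Q.natDegree ≤ s) :
    (Q.coeff s / (P s).leadingCoeff) ^ 2 ≤ ∫ x, Q.eval x ^ 2 ∂μ := by
  have hint : ∀ A : ℝ[X], Integrable (fun x => A.eval x ^ 2) μ := fun A => by
    simpa [sq] using hμ (A * A)
  rw [← hP.integral_mul_eq_coeff_div hμ hQ]
  refine sq_integral_mul_le_integral_sq (hint Q) (by simpa using hμ (Q * P s)) (hint (P s)) ?_
  simpa [sq] using hP.integral_eval_mul_eval s s

theorem leadingCoeff_sq_le {ν : Measure ℝ} {Q : ℕ → ℝ[X]}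
    (hP : IsOrthonormalPolys μ P) (hQ : IsOrthonormalPolys ν Q) (hμ : HasFiniteMoments μ)
    {c : ℝ} (hc : 0 ≤ c) (hνμ : ν ≤ ENNReal.ofReal c • μ) (s : ℕ) :
    (P s).leadingCoeff ^ 2 ≤ c * (Q s).leadingCoeff ^ 2 := by
  have hν : HasFiniteMoments ν := fun g =>
    ((hμ g).smul_measure ENNReal.ofReal_ne_top).mono_measure hνμ
  have hPsq : Integrable (fun x => (P s).eval x ^ 2) μ := by simpa [sq] using hμ (P s * P s)
  have hbessel := hQ.sq_coeff_div_le_integral_sq hν (hP.natDegree_eq s).le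
  have hnorm : ∫ x, (P s).eval x ^ 2 ∂ν ≤ c :=
    calc ∫ x, (P s).eval x ^ 2 ∂ν
        ≤ ∫ x, (P s).eval x ^ 2 ∂(ENNReal.ofReal c • μ) :=
          integral_mono_measure hνμ (ae_of_all _ fun x => sq_nonneg _)
            (hPsq.smul_measure ENNReal.ofReal_ne_top)
      _ = c := by
          simp [sq, ENNReal.toReal_ofReal hc, hP.integral_eval_mul_eval s s]
  have hcoeff : (P s).coeff s = (P s).leadingCoeff := by rw [leadingCoeff, hP.natDegree_eq]
  rw [hcoeff, div_pow, div_le_iff₀ (pow_pos (hQ.leadingCoeff_pos s) 2)] at hbessel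
  exact hbessel.trans (mul_le_mul_of_nonneg_right hnorm (sq_nonneg _))

end IsOrthonormalPolys

theorem le_mul_of_sq_mul_le {c p p' b b' : ℝ} (hc : 0 ≤ c) (hp : 0 ≤ p) (hb' : 0 < b')
    (ha : (p' * b') ^ 2 ≤ c * (p * b) ^ 2) (hb : b ^ 2 ≤ c * b' ^ 2) : p' ≤ c * p := by
  have h : p' ^ 2 * b' ^ 2 ≤ (c * p) ^ 2 * b' ^ 2 :=
    calc p' ^ 2 * b' ^ 2 = (p' * b') ^ 2 := by ring
      _ ≤ c * p ^ 2 * b ^ 2 := by linarith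
      _ ≤ c * p ^ 2 * (c * b' ^ 2) := by gcongr
      _ = (c * p) ^ 2 * b' ^ 2 := by ring
  exact le_of_sq_le_sq (le_of_mul_le_mul_right h (by positivity)) (by positivity)

theorem abs_sub_le_mul_of_le_one_add_mul {ε x y : ℝ} (hε : 0 ≤ ε)
    (hxy : x ≤ (1 + ε) * y) (hyx : y ≤ (1 + ε) * x) : |x - y| ≤ ε * y := by
  rw [abs_le]
  constructor <;> nlinarith

open MeasureTheory in
theorem stmt_2_general (σ σₕ : Measure ℝ) [IsFiniteMeasure σ]
    (R : ℝ) (hsupp : σ {x | R < |x|} = 0)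
    (ε : ℝ) (hε : 0 ≤ ε) (f : ℝ → ℝ)
    (hdens : σₕ = σ.withDensity (fun x => ENNReal.ofReal (f x)))
    (hfl : ∀ x, (1 + ε)⁻¹ ≤ f x) (hfu : ∀ x, f x ≤ 1 + ε)
    (P Pₕ : ℕ → Polynomial ℝ) (p q pₕ qₕ : ℕ → ℝ)
    (hdeg : ∀ k, (P k).natDegree = k) (hlead : ∀ k, 0 < (P k).leadingCoeff)
    (horth : ∀ j k, ∫ x, (P j).eval x * (P k).eval x ∂σ = if j = k then 1 else 0)
    (hp : ∀ k, 1 ≤ k → 0 < p k)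
    (hrec0 : ∀ x : ℝ, x * (P 0).eval x = q 0 * (P 0).eval x + p 1 * (P 1).eval x)
    (hrec : ∀ k, 1 ≤ k → ∀ x : ℝ,
      x * (P k).eval x
        = p k * (P (k - 1)).eval x + q k * (P k).eval x + p (k + 1) * (P (k + 1)).eval x)
    (hdegₕ : ∀ k, (Pₕ k).natDegree = k) (hleadₕ : ∀ k, 0 < (Pₕ k).leadingCoeff)
    (horthₕ : ∀ j k, ∫ x, (Pₕ j).eval x * (Pₕ k).eval x ∂σₕ = if j = k then 1 else 0)
    (hpₕ : ∀ k, 1 ≤ k → 0 < pₕ k)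
    (hrec0ₕ : ∀ x : ℝ, x * (Pₕ 0).eval x = qₕ 0 * (Pₕ 0).eval x + pₕ 1 * (Pₕ 1).eval x)
    (hrecₕ : ∀ k, 1 ≤ k → ∀ x : ℝ,
      x * (Pₕ k).eval x
        = pₕ k * (Pₕ (k - 1)).eval x + qₕ k * (Pₕ k).eval x + pₕ (k + 1) * (Pₕ (k + 1)).eval x) :
    ∀ s : ℕ, 1 ≤ s → |pₕ s - p s| ≤ ε * p s := by
  intro s hs
  obtain ⟨t, rfl⟩ := Nat.exists_eq_add_of_le' hs
  have hε' : 0 ≤ 1 + ε := by linarith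
  have hσ : HasFiniteMoments σ := fun g => g.continuous.integrable_of_measure_abs_gt_eq_zero hsupp
  have hσₕσ : σₕ ≤ ENNReal.ofReal (1 + ε) • σ := hdens ▸ withDensity_ofReal_le_smul hfu
  have hσσₕ : σ ≤ ENNReal.ofReal (1 + ε) • σₕ := by
    simpa [hdens] using le_smul_withDensity_ofReal (by positivity) hfl
  have hσₕ : HasFiniteMoments σₕ := fun g =>
    ((hσ g).smul_measure ENNReal.ofReal_ne_top).mono_measure hσₕσ
  have hON : IsOrthonormalPolys σ P := ⟨hdeg, hlead, horth⟩
  have hONₕ : IsOrthonormalPolys σₕ Pₕ := ⟨hdegₕ, hleadₕ, horthₕ⟩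
  have hγ := leadingCoeff_eq_mul_leadingCoeff_succ hdeg hrec0 hrec t
  have hγₕ := leadingCoeff_eq_mul_leadingCoeff_succ hdegₕ hrec0ₕ hrecₕ t
  have hle := hON.leadingCoeff_sq_le hONₕ hσ hε' hσₕσ
  have hge := hONₕ.leadingCoeff_sq_le hON hσₕ hε' hσσₕ
  refine abs_sub_le_mul_of_le_one_add_mul hε ?_ ?_
  · exact le_mul_of_sq_mul_le hε' (hp _ hs).le (hleadₕ _) (hγ ▸ hγₕ ▸ hge t) (hle (t + 1))
  · exact le_mul_of_sq_mul_le hε' (hpₕ _ hs).le (hlead _) (hγₕ ▸ hγ ▸ hle t) (hge (t + 1))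

open MeasureTheory in
/-- Comparison of Jacobi coefficients of mutually absolutely continuous
measures: if `dσ̂ = f dσ` with `(1+ε)⁻¹ ≤ f ≤ 1+ε`, then the off-diagonal
recurrence coefficients of the orthonormal polynomials of `σ` and `σ̂` satisfy
`|p̂_s − p_s| ≤ ε p_s` for every `s`. -/
theorem stmt_2 (σ σₕ : Measure ℝ) [IsFiniteMeasure σ] [IsFiniteMeasure σₕ]
    (R : ℝ) (hsupp : σ {x | R < |x|} = 0)
    (hinf : ∀ F : Finset ℝ, σ ((↑F : Set ℝ)ᶜ) ≠ 0)
    (ε : ℝ) (hε : 0 ≤ ε) (f : ℝ → ℝ) (hf : Measurable f)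
    (hdens : σₕ = σ.withDensity (fun x => ENNReal.ofReal (f x)))
    (hfl : ∀ x, (1 + ε)⁻¹ ≤ f x) (hfu : ∀ x, f x ≤ 1 + ε)
    (P Pₕ : ℕ → Polynomial ℝ) (p q pₕ qₕ : ℕ → ℝ)
    (hdeg : ∀ k, (P k).natDegree = k) (hlead : ∀ k, 0 < (P k).leadingCoeff)
    (horth : ∀ j k, ∫ x, (P j).eval x * (P k).eval x ∂σ = if j = k then 1 else 0)
    (hp : ∀ k, 1 ≤ k → 0 < p k)
    (hrec0 : ∀ x : ℝ, x * (P 0).eval x = q 0 * (P 0).eval x + p 1 * (P 1).eval x)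
    (hrec : ∀ k, 1 ≤ k → ∀ x : ℝ,
      x * (P k).eval x
        = p k * (P (k - 1)).eval x + q k * (P k).eval x + p (k + 1) * (P (k + 1)).eval x)
    (hdegₕ : ∀ k, (Pₕ k).natDegree = k) (hleadₕ : ∀ k, 0 < (Pₕ k).leadingCoeff)
    (horthₕ : ∀ j k, ∫ x, (Pₕ j).eval x * (Pₕ k).eval x ∂σₕ = if j = k then 1 else 0)
    (hpₕ : ∀ k, 1 ≤ k → 0 < pₕ k)
    (hrec0ₕ : ∀ x : ℝ, x * (Pₕ 0).eval x = qₕ 0 * (Pₕ 0).eval x + pₕ 1 * (Pₕ 1).eval x)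
    (hrecₕ : ∀ k, 1 ≤ k → ∀ x : ℝ,
      x * (Pₕ k).eval x
        = pₕ k * (Pₕ (k - 1)).eval x + qₕ k * (Pₕ k).eval x + pₕ (k + 1) * (Pₕ (k + 1)).eval x) :
    ∀ s : ℕ, 1 ≤ s → |pₕ s - p s| ≤ ε * p s :=
  stmt_2_general σ σₕ R hsupp ε hε f hdens hfl hfu P Pₕ p q pₕ qₕ hdeg hlead horth hp hrec0 hrec
    hdegₕ hleadₕ horthₕ hpₕ hrec0ₕ hrecₕ
end

section
/- If the Renormalization Equation V*(z − J)^{-1}V = (T(z) − J̃)^{-1} T'(z)/d holds for all z outside the spectra, then the two polynomial identities V* T(J) = J̃ V* and V* [(T(z) − T(J))/(z − J)] V = T'(z)/d (as a polynomial identity in z) hold; conversely, these two identities imply the Renormalization Equation. -/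
/-!
Write `R(z) = (z - J)⁻¹`, `S(z)` for the divided difference and `D = J̃ V* - V* T(J)`.
Since `S(z) = (T(z) - T(J)) R(z)`, for every `z` off the spectrum of `J`
  `V* S(z) V = D R(z) V + (T(z) - J̃) V* R(z) V`,
so where both resolvents exist the Renormalization Equation at `z` says exactly
`V* S(z) V - T'(z)/d = D R(z) V`. The two identities give `D = 0` and `V* S V = T'/d`, so
they imply the Renormalization Equation at once.

Conversely, the Renormalization Equation holds on a neighbourhood of `∞`, where the left side is
an entire function of `z` and the right side tends to `0`; by Liouville both vanish identically.
Expanding `z R(z) = 1 + J R(z)` at `∞` then gives `D Jᵐ V = 0` for all `m`, hence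
`D p(J) V = 0` for every polynomial `p`. Finally `Y = V J̃ - T(J)* V` satisfies `Y* = D` and
`Y* Y = D V J̃ - D T(J)* V = 0`, because `T(J)*` is again a polynomial in the self-adjoint `J`;
the C*-identity forces `Y = 0`, that is `D = 0`.
-/

open Filter Topology Polynomial Finset

namespace Polynomial

variable {R A : Type*} [CommRing R] [Ring A] [Algebra R A]

noncomputable def divDiff (T : R[X]) (a : A) (z : R) : A :=
  ∑ k ∈ range (T.natDegree + 1), ∑ i ∈ range k, (T.coeff k * z ^ i) • a ^ (k - 1 - i)

theorem divDiff_mul_sub (T : R[X]) (a : A) (z : R) :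
    T.divDiff a z * (algebraMap R A z - a) = algebraMap R A (T.eval z) - aeval a T := by
  simp only [divDiff, Finset.sum_mul, eval_eq_sum_range, aeval_eq_sum_range, map_sum,
    ← Finset.sum_sub_distrib]
  refine Finset.sum_congr rfl fun k _ ↦ ?_
  simp only [mul_smul, Algebra.smul_def (z ^ _), map_pow, ← Finset.smul_sum, ← Finset.sum_mul,
    smul_mul_assoc, (Algebra.commute_algebraMap_left z a).geom_sum₂_mul, smul_sub]
  rw [map_mul, ← Algebra.smul_def, map_pow]

theorem divDiff_eq_mul_resolvent (T : R[X]) {a : A} {z : R} (hz : z ∉ spectrum R a) :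
    T.divDiff a z = (algebraMap R A (T.eval z) - aeval a T) * resolvent a z := by
  rw [← divDiff_mul_sub, mul_assoc, resolvent,
    Ring.mul_inverse_cancel _ (spectrum.notMem_iff.1 hz), mul_one]

theorem mul_divDiff_mul (T : R[X]) {J : A} {z : R} (hz : z ∉ spectrum R J) (W V Jt : A) :
    W * T.divDiff J z * V = (Jt * W - W * aeval J T) * resolvent J z * V
      + (algebraMap R A (T.eval z) - Jt) * (W * resolvent J z * V) := by
  rw [divDiff_eq_mul_resolvent T hz]
  simp only [mul_sub, sub_mul, mul_assoc]
  rw [← mul_assoc (algebraMap R A _) W, Algebra.commutes (T.eval z) W, mul_assoc]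
  abel

@[fun_prop]
theorem differentiable_divDiff {A : Type*} [NormedRing A] [NormedAlgebra ℂ A] (T : ℂ[X])
    (a : A) : Differentiable ℂ fun z ↦ T.divDiff a z := by
  unfold divDiff
  fun_prop

theorem tendsto_eval_cocompact {𝕜 : Type*} [NontriviallyNormedField 𝕜] [ProperSpace 𝕜]
    (T : 𝕜[X]) (hT : 0 < T.degree) : Tendsto T.eval (cocompact 𝕜) (cocompact 𝕜) :=
  (isProperMap_iff_tendsto_cocompact.1 (T.isProperMap_eval hT)).2

end Polynomial

section Algebraic

variable {R A : Type*} [CommRing R] [Ring A] [Algebra R A]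

theorem IsUnit.mul_eq_smul_one_iff {u : A} (hu : IsUnit u) (x : A) (c : R) :
    u * x = c • 1 ↔ x = c • Ring.inverse u := by
  obtain ⟨u, rfl⟩ := hu
  rw [Ring.inverse_unit, ← mul_smul_one c (u⁻¹ : Aˣ).val, Units.eq_inv_mul_iff_mul_eq]

theorem smul_resolvent_self {a : A} {z : R} (hz : z ∉ spectrum R a) :
    z • resolvent a z = 1 + a * resolvent a z := by
  have h := Ring.mul_inverse_cancel _ (spectrum.notMem_iff.1 hz)
  rw [sub_mul] at h
  rw [Algebra.smul_def]
  exact eq_add_of_sub_eq h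

/-- In the paper `W = V*` and `c = T'/d`. -/
def RenormalizationEquation (T : R[X]) (c : R → R) (J Jt W V : A) : Prop :=
  ∀ z, z ∉ spectrum R J → T.eval z ∉ spectrum R Jt →
    W * resolvent J z * V = c z • resolvent Jt (T.eval z)

theorem renormalizationEquation_of_intertwining {T : R[X]} {c : R → R} {J Jt W V : A}
    (hJ : W * aeval J T = Jt * W) (hdiv : ∀ z, W * T.divDiff J z * V = c z • 1) :
    RenormalizationEquation T c J Jt W V := by
  intro z hz hTz
  have h := hdiv z
  rw [mul_divDiff_mul T hz W V Jt, hJ, sub_self, zero_mul, zero_mul, zero_add] at h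
  exact ((spectrum.notMem_iff.1 hTz).mul_eq_smul_one_iff _ _).1 h

end Algebraic

section Analytic

variable {A : Type*} [NormedRing A] [NormedAlgebra ℂ A] [CompleteSpace A]

theorem tendsto_mul_resolvent_mul (X a Y : A) :
    Tendsto (fun z ↦ X * resolvent a z * Y) (cocompact ℂ) (𝓝 0) := by
  rw [← Metric.cobounded_eq_cocompact]
  simpa using
    ((tendsto_const_nhds (x := X)).mul (spectrum.resolvent_tendsto_cobounded a)).mul_const Y

theorem mul_mul_eq_zero_of_eventually_mul_resolvent_mul_eq_zero {X a Y : A}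
    (h : ∀ᶠ z in cocompact ℂ, X * resolvent a z * Y = 0) :
    X * Y = 0 ∧ ∀ᶠ z in cocompact ℂ, X * a * resolvent a z * Y = 0 := by
  have hshift : ∀ᶠ z in cocompact ℂ,
      z • (X * resolvent a z * Y) = X * Y + X * a * resolvent a z * Y := by
    filter_upwards [(spectrum.isCompact a).compl_mem_cocompact] with z hz
    rw [← smul_mul_assoc, ← mul_smul_comm, smul_resolvent_self hz]
    noncomm_ring
  have hXY : X * Y = 0 := by
    have hlim := (tendsto_mul_resolvent_mul (X * a) a Y).neg
    rw [neg_zero] at hlim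
    refine tendsto_nhds_unique (tendsto_const_nhds.congr' ?_) hlim
    filter_upwards [h, hshift] with z hz hsz
    rw [hz, smul_zero] at hsz
    simpa [eq_neg_iff_add_eq_zero, add_comm] using hsz.symm
  refine ⟨hXY, ?_⟩
  filter_upwards [h, hshift] with z hz hsz
  rwa [hz, smul_zero, hXY, zero_add, eq_comm] at hsz

theorem mul_pow_mul_eq_zero_of_eventually_mul_resolvent_mul_eq_zero {X a Y : A}
    (h : ∀ᶠ z in cocompact ℂ, X * resolvent a z * Y = 0) (m : ℕ) : X * a ^ m * Y = 0 := by
  suffices ∀ m : ℕ, ∀ᶠ z in cocompact ℂ, X * a ^ m * resolvent a z * Y = 0 from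
    (mul_mul_eq_zero_of_eventually_mul_resolvent_mul_eq_zero (this m)).1
  intro m
  induction m with
  | zero => simpa using h
  | succ m ih =>
    simpa [pow_succ, mul_assoc] using
      (mul_mul_eq_zero_of_eventually_mul_resolvent_mul_eq_zero ih).2

namespace RenormalizationEquation

variable {T : ℂ[X]} {c : ℂ → ℂ} {J Jt W V : A}

theorem eventuallyEq (h : RenormalizationEquation T c J Jt W V) (hT : 0 < T.degree) :
    ∀ᶠ z in cocompact ℂ,
      W * T.divDiff J z * V - c z • 1 = (Jt * W - W * aeval J T) * resolvent J z * V := by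
  have hres : ∀ᶠ z in cocompact ℂ, z ∉ spectrum ℂ J ∧ T.eval z ∉ spectrum ℂ Jt :=
    Filter.Eventually.and (spectrum.isCompact J).compl_mem_cocompact
      (T.tendsto_eval_cocompact hT (spectrum.isCompact Jt).compl_mem_cocompact)
  filter_upwards [hres] with z ⟨hz, hTz⟩
  rw [mul_divDiff_mul T hz W V Jt,
    ((spectrum.notMem_iff.1 hTz).mul_eq_smul_one_iff _ _).2 (h z hz hTz), add_sub_cancel_right]

theorem mul_divDiff_mul (h : RenormalizationEquation T c J Jt W V) (hT : 0 < T.degree)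
    (hc : Differentiable ℂ c) (z : ℂ) : W * T.divDiff J z * V = c z • 1 :=
  sub_eq_zero.1 <| Differentiable.apply_eq_of_tendsto_cocompact (by fun_prop) z
    ((tendsto_mul_resolvent_mul _ J V).congr' ((h.eventuallyEq hT).mono fun _ h ↦ h.symm))

theorem mul_pow_mul_eq_zero (h : RenormalizationEquation T c J Jt W V) (hT : 0 < T.degree)
    (hc : Differentiable ℂ c) (m : ℕ) : (Jt * W - W * aeval J T) * J ^ m * V = 0 := by
  refine mul_pow_mul_eq_zero_of_eventually_mul_resolvent_mul_eq_zero ?_ m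
  filter_upwards [h.eventuallyEq hT] with z hz
  rw [← hz, h.mul_divDiff_mul hT hc, sub_self]

end RenormalizationEquation

end Analytic

theorem mul_aeval_mul_eq_zero {R A : Type*} [CommSemiring R] [Semiring A] [Algebra R A]
    {X a Y : A} (h : ∀ m : ℕ, X * a ^ m * Y = 0) (q : R[X]) : X * aeval a q * Y = 0 := by
  induction q using Polynomial.induction_on' with
  | add p q hp hq => simp [mul_add, add_mul, hp, hq]
  | monomial n r =>
    rw [aeval_monomial, ← Algebra.smul_def, mul_smul_comm, smul_mul_assoc, h, smul_zero]

theorem IsSelfAdjoint.star_aeval {A : Type*} [Semiring A] [StarRing A] [Algebra ℂ A]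
    [StarModule ℂ A] {a : A} (ha : IsSelfAdjoint a) (q : ℂ[X]) :
    star (aeval a q) = aeval a (q.map (starRingEnd ℂ)) := by
  induction q using Polynomial.induction_on' with
  | add p q hp hq => simp [hp, hq]
  | monomial n r => simp [ha.star_eq, ← algebraMap_star_comm, Algebra.commutes]

theorem star_mul_eq_mul_star_of_mul_eq_zero {A : Type*} [NonUnitalNormedRing A] [StarRing A]
    [CStarRing A] {B V Jt : A} (hJt : IsSelfAdjoint Jt)
    (hV : (Jt * star V - star V * B) * V = 0) (hB : (Jt * star V - star V * B) * star B * V = 0) :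
    star V * B = Jt * star V := by
  set Y := V * Jt - star B * V
  have hY : star Y = Jt * star V - star V * B := by
    simp only [Y, star_sub, star_mul, star_star, hJt.star_eq]
  have hYY : star Y * Y = 0 := by
    rw [hY, mul_sub, ← mul_assoc, ← mul_assoc, hV, hB, zero_mul, sub_zero]
  rw [eq_comm, ← sub_eq_zero, ← hY, (CStarRing.star_mul_self_eq_zero_iff Y).1 hYY, star_zero]

open ContinuousLinearMap Polynomial in
theorem stmt_14_general {H : Type*} [NormedAddCommGroup H] [InnerProductSpace ℂ H] [CompleteSpace H]
    (T : Polynomial ℂ) (d : ℕ) (hd : d = T.natDegree) (h1 : 1 ≤ d)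
    (J Jt : H →L[ℂ] H) (hJ : IsSelfAdjoint J) (hJt : IsSelfAdjoint Jt)
    (V : H →L[ℂ] H) :
    (∀ z : ℂ, IsUnit (z • (1 : H →L[ℂ] H) - J) →
        IsUnit (T.eval z • (1 : H →L[ℂ] H) - Jt) →
        adjoint V * Ring.inverse (z • (1 : H →L[ℂ] H) - J) * V
          = (T.derivative.eval z / d) • Ring.inverse (T.eval z • (1 : H →L[ℂ] H) - Jt))
    ↔ ((adjoint V * Polynomial.aeval J T = Jt * adjoint V) ∧
        ∀ z : ℂ,
          adjoint V *
              (∑ k ∈ Finset.range (T.natDegree + 1), ∑ i ∈ Finset.range k,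
                (T.coeff k * z ^ i) • J ^ (k - 1 - i)) * V
            = (T.derivative.eval z / d) • (1 : H →L[ℂ] H)) := by
  have hT : 0 < T.degree := natDegree_pos_iff_degree_pos.1 (hd ▸ h1)
  have hσ (a : H →L[ℂ] H) (z : ℂ) : IsUnit (z • 1 - a) ↔ z ∉ spectrum ℂ a := by
    rw [spectrum.notMem_iff, Algebra.algebraMap_eq_smul_one]
  have hR (a : H →L[ℂ] H) (z : ℂ) : Ring.inverse (z • 1 - a) = resolvent a z := by
    rw [resolvent, Algebra.algebraMap_eq_smul_one]
  simp only [hσ, hR, ← star_eq_adjoint]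
  change RenormalizationEquation T (fun z ↦ T.derivative.eval z / d) J Jt (star V) V ↔
    star V * aeval J T = Jt * star V ∧ ∀ z, star V * T.divDiff J z * V = _
  constructor
  · intro hRE
    have hpow := hRE.mul_pow_mul_eq_zero hT (by fun_prop)
    refine ⟨star_mul_eq_mul_star_of_mul_eq_zero hJt (by simpa using hpow 0) ?_,
      hRE.mul_divDiff_mul hT (by fun_prop)⟩
    rw [hJ.star_aeval]
    exact mul_aeval_mul_eq_zero hpow _
  · rintro ⟨hA, hdiv⟩
    exact renormalizationEquation_of_intertwining hA hdiv

open ContinuousLinearMap Polynomial in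
/-- Equivalence of the Renormalization Equation
`V*(z − J)⁻¹V = (T(z) − J̃)⁻¹ T'(z)/d` (for `z` in the joint resolvent set) with
the pair of polynomial identities `V* T(J) = J̃ V*` and
`V* [(T(z) − T(J))/(z − J)] V = (T'(z)/d)·1`, where the divided difference is the
operator-valued polynomial `Σ_k a_k Σ_{i<k} z^i J^{k−1−i}`. -/
theorem stmt_14 {H : Type*} [NormedAddCommGroup H] [InnerProductSpace ℂ H] [CompleteSpace H]
    (T : Polynomial ℂ) (d : ℕ) (hd : d = T.natDegree) (h1 : 1 ≤ d)
    (J Jt : H →L[ℂ] H) (hJ : IsSelfAdjoint J) (hJt : IsSelfAdjoint Jt)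
    (V : H →L[ℂ] H) (hV : adjoint V * V = 1) :
    (∀ z : ℂ, IsUnit (z • (1 : H →L[ℂ] H) - J) →
        IsUnit (T.eval z • (1 : H →L[ℂ] H) - Jt) →
        adjoint V * Ring.inverse (z • (1 : H →L[ℂ] H) - J) * V
          = (T.derivative.eval z / d) • Ring.inverse (T.eval z • (1 : H →L[ℂ] H) - Jt))
    ↔ ((adjoint V * Polynomial.aeval J T = Jt * adjoint V) ∧
        ∀ z : ℂ,
          adjoint V *
              (∑ k ∈ Finset.range (T.natDegree + 1), ∑ i ∈ Finset.range k,
                (T.coeff k * z ^ i) • J ^ (k - 1 - i)) * V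
            = (T.derivative.eval z / d) • (1 : H →L[ℂ] H)) :=
  stmt_14_general T d hd h1 J Jt hJ hJt V
end

section
/- Balanced measure as Ruelle eigenmeasure: a compactly supported probability measure σ on ℝ satisfies ∫ (T'(z)/d)/(T(z) − x) dσ(x) = ∫ 1/(z − x) dσ(x) for all z in a neighborhood of infinity if and only if σ is invariant under the dual Ruelle operator, i.e. ∫ (1/d) Σ_{T(y)=x} f(y) dσ(x) = ∫ f dσ for all continuous f (σ is the balanced measure of T). -/
/-!
If `T - x` splits over `ℝ`, the logarithmic derivative of `T - x` at `z` is `Σ_{T y = x} 1/(z - y)`,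
so `(T'(z)/d)/(T(z) - x)` is the Ruelle operator `L` applied to the Cauchy kernel `y ↦ 1/(z - y)`.
The Stieltjes identity therefore says that `∫ L f dσ = ∫ f dσ` for these kernels, and the theorem
reduces to the density of the span of the constants and the kernels with `z` large in `C([-c, c])`,
where `[-c, c]` contains `K` and all preimages of points of `K`.

Density: multiplication by `y` sends `1/(z - y)` to `z/(z - y) - 1`, and `y` itself is the uniform
limit of `z (z/(z - y) - 1) = y + y²/(z - y)` as `z → ∞`; so the closed span is stable under
multiplication by `y`, contains all polynomials, and is everything by Weierstrass.

Passing to the limit: `L f - f` is bounded by `2 ‖f‖` on `K`. Nothing is known a priori about the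
measurability of `L f`, so continuity of `L f` on `K` is carried along: the set of `f` for which
`L f - f` is continuous on `K` with integral zero is a closed subspace.
-/

open Polynomial MeasureTheory Set Filter Topology

def cauchyKernels (s : Set ℝ) (R : ℝ) : Set C(s, ℝ) :=
  {g | ∃ z, R < z ∧ ∀ y : s, g y = (z - y)⁻¹}

section CauchyKernels

variable {s : Set ℝ} {R : ℝ}

theorem exists_mem_cauchyKernels_norm_le [CompactSpace s] (hR : ∀ y ∈ s, y ≤ R) {z : ℝ}
    (hz : R < z) : ∃ g ∈ cauchyKernels s R, ‖g‖ ≤ (z - R)⁻¹ := by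
  have hpos : ∀ y : s, 0 < z - y := fun y => by linarith [hR y y.2]
  refine ⟨⟨fun y => (z - y)⁻¹, by fun_prop (disch := exact fun y => (hpos y).ne')⟩,
    ⟨z, hz, fun _ => rfl⟩, (ContinuousMap.norm_le _ (by simp only [inv_nonneg]; linarith)).mpr
      fun y => ?_⟩
  rw [ContinuousMap.coe_mk, norm_inv, Real.norm_of_nonneg (hpos y).le]
  exact inv_anti₀ (by linarith) (by linarith [hR y y.2])

theorem restrict_id_mul_eq_smul_sub_one {g : C(s, ℝ)} {z : ℝ} (hz : z ∉ s)
    (hg : ∀ y : s, g y = (z - y)⁻¹) :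
    ContinuousMap.restrict s (ContinuousMap.id ℝ) * g = z • g - 1 := by
  ext y
  have : z - y ≠ 0 := sub_ne_zero.mpr fun h => hz (h ▸ y.2)
  simp only [ContinuousMap.mul_apply, ContinuousMap.sub_apply, ContinuousMap.smul_apply,
    ContinuousMap.one_apply, ContinuousMap.restrict_apply, ContinuousMap.id_apply, smul_eq_mul, hg]
  field_simp
  ring

theorem span_insert_one_cauchyKernels_topologicalClosure_eq_top [CompactSpace s]
    (hR : ∀ y ∈ s, y ≤ R) :
    (Submodule.span ℝ (insert 1 (cauchyKernels s R))).topologicalClosure = ⊤ := by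
  set V := Submodule.span ℝ (insert 1 (cauchyKernels s R))
  set W := V.topologicalClosure
  set x := ContinuousMap.restrict s (ContinuousMap.id ℝ)
  have hVW : V ≤ W := V.le_topologicalClosure
  have hnotMem : ∀ {z}, R < z → z ∉ s := fun hz hzs => (hR _ hzs).not_gt hz
  have hxW : x ∈ W := by
    choose g hg hgn using fun n : ℕ =>
      exists_mem_cauchyKernels_norm_le hR (z := R + (n + 1)) (by linarith)
    have hmem : ∀ n, x + x * (x * g n) ∈ V := fun n => by
      obtain ⟨z, hz, hgz⟩ := hg n
      have hxg := restrict_id_mul_eq_smul_sub_one (hnotMem hz) hgz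
      have : x + x * (x * g n) = z • (z • g n - 1) := by
        rw [hxg, mul_sub, mul_smul_comm, hxg, mul_one]; abel
      rw [this]
      exact V.smul_mem z (V.sub_mem (V.smul_mem z (Submodule.subset_span (Or.inr (hg n))))
        (Submodule.subset_span (Or.inl rfl)))
    have hsmall : Tendsto (fun n => x * (x * g n)) atTop (𝓝 0) := by
      refine squeeze_zero_norm (fun n => ?_) <| by
        simpa using (tendsto_one_div_add_atTop_nhds_zero_nat.const_mul ‖x‖).const_mul ‖x‖
      refine (norm_mul_le _ _).trans (mul_le_mul_of_nonneg_left ((norm_mul_le _ _).trans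
        (mul_le_mul_of_nonneg_left ?_ (norm_nonneg _))) (norm_nonneg _))
      simpa using hgn n
    have hlim : Tendsto (fun n => x + x * (x * g n)) atTop (𝓝 x) := by
      simpa using tendsto_const_nhds.add hsmall
    exact mem_closure_of_tendsto hlim (Eventually.of_forall hmem)
  have hmulW : W ≤ W.comap (ContinuousLinearMap.mul ℝ C(s, ℝ) x).toLinearMap := by
    refine V.topologicalClosure_minimal (Submodule.span_le.mpr ?_)
      (V.isClosed_topologicalClosure.preimage (ContinuousLinearMap.continuous _))
    rintro g (rfl | ⟨z, hz, hg⟩)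
    · simpa using hxW
    · simp only [SetLike.mem_coe, Submodule.mem_comap, ContinuousLinearMap.coe_coe,
        ContinuousLinearMap.mul_apply']
      rw [restrict_id_mul_eq_smul_sub_one (hnotMem hz) hg]
      exact hVW (V.sub_mem (V.smul_mem z (Submodule.subset_span (Or.inr ⟨z, hz, hg⟩)))
        (Submodule.subset_span (Or.inl rfl)))
  have hpoly : ∀ p : ℝ[X], p.toContinuousMapOnAlgHom s ∈ W := by
    intro p
    induction p using Polynomial.induction_on with
    | C a =>
      rw [← algebraMap_eq, AlgHom.commutes, Algebra.algebraMap_eq_smul_one]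
      exact W.smul_mem a (hVW (Submodule.subset_span (Or.inl rfl)))
    | add p q hp hq => rw [map_add]; exact W.add_mem hp hq
    | monomial n a hn =>
      have hX : toContinuousMapOnAlgHom s X = x := by ext; simp [x]
      rw [pow_succ, ← mul_assoc, mul_comm, map_mul, hX]
      exact hmulW hn
  rw [eq_top_iff]
  intro g _
  have hg : g ∈ ((polynomialFunctions s).topologicalClosure : Set C(s, ℝ)) := by
    rw [polynomialFunctions.topologicalClosure]; trivial
  rw [Subalgebra.topologicalClosure_coe] at hg
  refine closure_minimal ?_ V.isClosed_topologicalClosure hg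
  rintro _ ⟨p, -, rfl⟩
  exact hpoly p

end CauchyKernels

section ClosedConditions

variable {α E : Type*} [TopologicalSpace α] [T2Space α] [MeasurableSpace α]
  [OpensMeasurableSpace α] [NormedAddCommGroup E] [NormedSpace ℝ E]
  {μ : Measure α} [IsFiniteMeasure μ] {K : Set α}

theorem ContinuousOn.integrable_of_measure_compl_eq_zero {f : α → ℝ} (hf : ContinuousOn f K)
    (hK : IsCompact K) (hKμ : μ Kᶜ = 0) : Integrable f μ := by
  rw [← Measure.restrict_eq_self_of_ae_mem (mem_ae_iff.mpr hKμ)]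
  exact hf.integrableOn_compact hK

theorem isClosed_setOf_continuousOn_and_integral_eq_zero (hK : IsCompact K) (hKμ : μ Kᶜ = 0)
    (D : E →ₗ[ℝ] α → ℝ) {C : ℝ} (hD : ∀ g, ∀ x ∈ K, |D g x| ≤ C * ‖g‖) :
    IsClosed {g | ContinuousOn (D g) K ∧ ∫ x, D g x ∂μ = 0} := by
  refine isClosed_of_closure_subset fun g hg => ?_
  obtain ⟨u, hu, hug⟩ := mem_closure_iff_seq_limit.mp hg
  have hdist : ∀ n, ∀ x ∈ K, |D g x - D (u n) x| ≤ C * ‖g - u n‖ := fun n x hx => by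
    simpa using hD (g - u n) x hx
  have hbound : Tendsto (fun n => C * ‖g - u n‖) atTop (𝓝 0) := by
    simpa [norm_sub_rev] using (tendsto_iff_norm_sub_tendsto_zero.mp hug).const_mul C
  have hcont : ContinuousOn (D g) K := by
    refine TendstoUniformlyOn.continuousOn (F := fun n => D (u n)) (p := atTop) ?_
      (Eventually.of_forall fun n => (hu n).1).frequently
    refine Metric.tendstoUniformlyOn_iff.mpr fun ε hε => ?_
    filter_upwards [hbound.eventually (gt_mem_nhds hε)] with n hn x hx
    rw [Real.dist_eq]
    exact (hdist n x hx).trans_lt hn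
  refine ⟨hcont, abs_nonpos_iff.mp (ge_of_tendsto (hbound.mul_const (μ.real univ))
    (Eventually.of_forall fun n => ?_) |>.trans_eq (zero_mul _))⟩
  rw [← sub_zero (∫ x, D g x ∂μ), ← (hu n).2, ← integral_sub
    (hcont.integrable_of_measure_compl_eq_zero hK hKμ)
    ((hu n).1.integrable_of_measure_compl_eq_zero hK hKμ), ← Real.norm_eq_abs]
  refine norm_integral_le_of_norm_le_const ?_
  filter_upwards [mem_ae_iff.mpr hKμ] with x hx
  exact hdist n x hx

theorem continuousOn_and_integral_eq_zero_of_mem_topologicalClosure (hK : IsCompact K)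
    (hKμ : μ Kᶜ = 0) (D : E →ₗ[ℝ] α → ℝ) {C : ℝ} (hD : ∀ g, ∀ x ∈ K, |D g x| ≤ C * ‖g‖)
    {G : Set E} (hG : ∀ g ∈ G, ContinuousOn (D g) K ∧ ∫ x, D g x ∂μ = 0) {g : E}
    (hg : g ∈ (Submodule.span ℝ G).topologicalClosure) :
    ContinuousOn (D g) K ∧ ∫ x, D g x ∂μ = 0 := by
  have hint {F : α → ℝ} (hF : ContinuousOn F K) : Integrable F μ :=
    hF.integrable_of_measure_compl_eq_zero hK hKμ
  let P : Submodule ℝ E :=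
    { carrier := {g | ContinuousOn (D g) K ∧ ∫ x, D g x ∂μ = 0}
      add_mem' := fun {g h} hg hh => by
        simp only [mem_ofPred_eq, map_add, Pi.add_apply]
        exact ⟨hg.1.add hh.1, by rw [integral_add (hint hg.1) (hint hh.1), hg.2, hh.2, add_zero]⟩
      zero_mem' := ⟨by rw [map_zero]; exact continuousOn_const, by simp⟩
      smul_mem' := fun a g hg => by
        simp only [mem_ofPred_eq, map_smul, Pi.smul_apply, smul_eq_mul]
        exact ⟨continuousOn_const.mul hg.1, by rw [integral_const_mul, hg.2, mul_zero]⟩ }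
  exact Submodule.topologicalClosure_minimal (t := P) _ (Submodule.span_le.mpr fun g hg => hG g hg)
    (isClosed_setOf_continuousOn_and_integral_eq_zero hK hKμ D hD) hg

end ClosedConditions

def SupBoundedOn (L : (ℝ → ℝ) →ₗ[ℝ] ℝ → ℝ) (s K : Set ℝ) : Prop :=
  ∀ x ∈ K, ∀ f M, 0 ≤ M → (∀ y ∈ s, |f y| ≤ M) → |L f x| ≤ M

theorem SupBoundedOn.apply_eq_of_eqOn {L : (ℝ → ℝ) →ₗ[ℝ] ℝ → ℝ} {s K : Set ℝ}
    (hL : SupBoundedOn L s K) {f₁ f₂ : ℝ → ℝ} (h : EqOn f₁ f₂ s) {x : ℝ} (hx : x ∈ K) :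
    L f₁ x = L f₂ x := by
  have := hL x hx (f₁ - f₂) 0 le_rfl fun y hy => by simp [h hy]
  rwa [map_sub, Pi.sub_apply, abs_nonpos_iff, sub_eq_zero] at this

section Defect

variable {a b : ℝ} (L : (ℝ → ℝ) →ₗ[ℝ] ℝ → ℝ)

noncomputable def defect (hab : a ≤ b) : C(Icc a b, ℝ) →ₗ[ℝ] ℝ → ℝ :=
  (L - LinearMap.id) ∘ₗ
    { toFun := fun g => IccExtend hab g, map_add' := fun _ _ => rfl, map_smul' := fun _ _ => rfl }

theorem defect_apply (hab : a ≤ b) (g : C(Icc a b, ℝ)) (x : ℝ) :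
    defect L hab g x = L (IccExtend hab g) x - IccExtend hab g x :=
  rfl

variable {L} {K : Set ℝ}

theorem abs_defect_le (hab : a ≤ b) (hL : SupBoundedOn L (Icc a b) K) (g : C(Icc a b, ℝ)) {x : ℝ}
    (hx : x ∈ K) : |defect L hab g x| ≤ 2 * ‖g‖ := by
  have hg : ∀ y, |IccExtend hab g y| ≤ ‖g‖ := fun y => g.norm_coe_le_norm _
  calc |defect L hab g x| ≤ |L (IccExtend hab g) x| + |IccExtend hab g x| := abs_sub _ _
    _ ≤ ‖g‖ + ‖g‖ := add_le_add (hL x hx _ _ (norm_nonneg g) fun y _ => hg y) (hg x)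
    _ = 2 * ‖g‖ := by ring

variable {σ : Measure ℝ} [IsFiniteMeasure σ]

theorem continuousOn_defect_and_integral_eq_zero_of_mem (hab : a ≤ b) (hK : IsCompact K)
    (hKσ : σ Kᶜ = 0) (hKab : K ⊆ Icc a b) (hL : SupBoundedOn L (Icc a b) K)
    (hL1 : ∀ x ∈ K, L 1 x = 1) {R : ℝ}
    (hR : ∀ z, R < z → ContinuousOn (L fun y => 1 / (z - y)) K ∧
      ∫ x, L (fun y => 1 / (z - y)) x ∂σ = ∫ x, 1 / (z - x) ∂σ)
    {g : C(Icc a b, ℝ)} (hg : g ∈ insert 1 (cauchyKernels (Icc a b) (max R b))) :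
    ContinuousOn (defect L hab g) K ∧ ∫ x, defect L hab g x ∂σ = 0 := by
  have hae : ∀ᵐ x ∂σ, x ∈ K := mem_ae_iff.mpr hKσ
  have hcongr : ∀ F : ℝ → ℝ, EqOn (defect L hab g) F K → ContinuousOn F K →
      ∫ x, F x ∂σ = 0 → ContinuousOn (defect L hab g) K ∧ ∫ x, defect L hab g x ∂σ = 0 :=
    fun F hgF hF hF0 =>
      ⟨hF.congr hgF, by rw [← hF0]; exact integral_congr_ae (hae.mono fun x hx => hgF hx)⟩
  rcases hg with rfl | ⟨z, hz, hgz⟩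
  · refine hcongr 0 (fun x hx => ?_) continuousOn_const (by simp)
    have h1 : IccExtend hab ⇑(1 : C(Icc a b, ℝ)) = 1 := rfl
    rw [defect_apply, h1, hL1 x hx, Pi.one_apply, sub_self, Pi.zero_apply]
  · set k : ℝ → ℝ := fun y => 1 / (z - y)
    have hRz : R < z := (le_max_left R b).trans_lt hz
    have hk : ContinuousOn k K := continuousOn_const.div (continuousOn_const.sub continuousOn_id)
      fun x hx => sub_ne_zero.mpr (((hKab hx).2.trans (le_max_right R b)).trans_lt hz).ne'
    have hext : EqOn (IccExtend hab g) k (Icc a b) := fun y hy => by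
      show _ = 1 / (z - y)
      rw [IccExtend_of_mem _ _ hy, hgz, one_div]
    refine hcongr (fun x => L k x - k x) (fun x hx => ?_) ((hR z hRz).1.sub hk) ?_
    · rw [defect_apply, hL.apply_eq_of_eqOn hext hx, hext (hKab hx)]
    · rw [integral_sub ((hR z hRz).1.integrable_of_measure_compl_eq_zero hK hKσ)
        (hk.integrable_of_measure_compl_eq_zero hK hKσ), (hR z hRz).2, sub_self]

theorem continuousOn_and_integral_eq_of_integral_one_div_sub_eq (hab : a ≤ b) (hK : IsCompact K)
    (hKσ : σ Kᶜ = 0) (hKab : K ⊆ Icc a b) (hL : SupBoundedOn L (Icc a b) K)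
    (hL1 : ∀ x ∈ K, L 1 x = 1) {R : ℝ}
    (hR : ∀ z, R < z → ContinuousOn (L fun y => 1 / (z - y)) K ∧
      ∫ x, L (fun y => 1 / (z - y)) x ∂σ = ∫ x, 1 / (z - x) ∂σ)
    {f : ℝ → ℝ} (hf : Continuous f) : ContinuousOn (L f) K ∧ ∫ x, L f x ∂σ = ∫ x, f x ∂σ := by
  set g : C(Icc a b, ℝ) := ⟨fun y => f y, hf.comp continuous_subtype_val⟩
  obtain ⟨hgcont, hgint⟩ := continuousOn_and_integral_eq_zero_of_mem_topologicalClosure hK hKσ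
    (defect L hab) (fun g x hx => abs_defect_le hab hL g hx)
    (fun _ => continuousOn_defect_and_integral_eq_zero_of_mem hab hK hKσ hKab hL hL1 hR) (g := g)
    (by
      rw [span_insert_one_cauchyKernels_topologicalClosure_eq_top
        fun y hy => hy.2.trans (le_max_right R b)]
      trivial)
  have hext : EqOn (IccExtend hab g) f (Icc a b) := fun y hy => IccExtend_of_mem _ _ hy
  have hLf : EqOn (L f) (fun x => defect L hab g x + f x) K := fun x hx => by
    show L f x = defect L hab g x + f x
    rw [defect_apply, hL.apply_eq_of_eqOn hext hx, hext (hKab hx), sub_add_cancel]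
  have hcont : ContinuousOn (L f) K := (hgcont.add hf.continuousOn).congr hLf
  refine ⟨hcont, ?_⟩
  have hae : ∀ᵐ x ∂σ, x ∈ K := mem_ae_iff.mpr hKσ
  rw [integral_congr_ae (hae.mono fun x hx => hLf hx),
    integral_add (hgcont.integrable_of_measure_compl_eq_zero hK hKσ)
      (hf.continuousOn.integrable_of_measure_compl_eq_zero hK hKσ), hgint, zero_add]

end Defect

theorem integral_one_div_sub_eq_of_forall_integral_eq {σ : Measure ℝ} {K : Set ℝ}
    (hKσ : σ Kᶜ = 0) {a b : ℝ} (hab : a ≤ b) (hKab : K ⊆ Icc a b) {L : (ℝ → ℝ) →ₗ[ℝ] ℝ → ℝ}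
    (hL : SupBoundedOn L (Icc a b) K) (h : ∀ f, Continuous f → ∫ x, L f x ∂σ = ∫ x, f x ∂σ)
    {z : ℝ} (hz : z ∉ Icc a b) : ∫ x, L (fun y => 1 / (z - y)) x ∂σ = ∫ x, 1 / (z - x) ∂σ := by
  have hae : ∀ᵐ x ∂σ, x ∈ K := mem_ae_iff.mpr hKσ
  set k : ℝ → ℝ := IccExtend hab fun y : Icc a b => 1 / (z - y)
  have hk : Continuous k := Continuous.Icc_extend' <| continuous_const.div
    (continuous_const.sub continuous_subtype_val) fun y h => hz (sub_eq_zero.mp h ▸ y.2)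
  have hkI : EqOn k (fun y => 1 / (z - y)) (Icc a b) := fun y hy => IccExtend_of_mem _ _ hy
  calc ∫ x, L (fun y => 1 / (z - y)) x ∂σ = ∫ x, L k x ∂σ :=
        integral_congr_ae (hae.mono fun x hx => (hL.apply_eq_of_eqOn hkI hx).symm)
    _ = ∫ x, k x ∂σ := h k hk
    _ = ∫ x, 1 / (z - x) ∂σ := integral_congr_ae (hae.mono fun x hx => hkI (hKab hx))

noncomputable def ruelle (T : ℝ[X]) : (ℝ → ℝ) →ₗ[ℝ] ℝ → ℝ where
  toFun f x := 1 / (T.natDegree : ℝ) * ((T - C x).roots.map f).sum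
  map_add' f g := by ext x; simp [Multiset.sum_map_add, mul_add]
  map_smul' a f := by ext x; simp [Multiset.sum_map_mul_left]; ring

section Ruelle

variable {T : ℝ[X]} {x : ℝ}

theorem ruelle_apply (f : ℝ → ℝ) (x : ℝ) :
    ruelle T f x = 1 / (T.natDegree : ℝ) * ((T - C x).roots.map f).sum :=
  rfl

theorem abs_ruelle_le {f : ℝ → ℝ} {M : ℝ} (hM : 0 ≤ M)
    (hf : ∀ y ∈ (T - C x).roots, |f y| ≤ M) : |ruelle T f x| ≤ M := by
  rw [ruelle_apply, abs_mul, abs_of_nonneg (by positivity)]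
  rcases Nat.eq_zero_or_pos T.natDegree with h | h
  · simp [h, hM]
  have hsum : |((T - C x).roots.map f).sum| ≤ T.natDegree * M :=
    calc |((T - C x).roots.map f).sum| ≤ ((T - C x).roots.map fun y => |f y|).sum := by
          simpa [Multiset.map_map] using
            Multiset.abs_sum_le_sum_abs (s := (T - C x).roots.map f)
      _ ≤ Multiset.card ((T - C x).roots.map fun y => |f y|) • M :=
          Multiset.sum_le_card_nsmul _ M fun _ h => by
            obtain ⟨y, hy, rfl⟩ := Multiset.mem_map.mp h
            exact hf y hy
      _ ≤ T.natDegree * M := by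
          rw [Multiset.card_map, nsmul_eq_mul]
          gcongr
          exact_mod_cast (card_roots' _).trans natDegree_sub_C.le
  calc 1 / (T.natDegree : ℝ) * |((T - C x).roots.map f).sum|
      ≤ 1 / (T.natDegree : ℝ) * (T.natDegree * M) := by gcongr
    _ = M := by field_simp

theorem ruelle_one (hx : Multiset.card (T - C x).roots = T.natDegree) (hT : T.natDegree ≠ 0) :
    ruelle T 1 x = 1 := by
  simp [ruelle_apply, Multiset.map_const', hx, hT]

theorem ruelle_one_div_sub (hx : Multiset.card (T - C x).roots = T.natDegree) {z : ℝ}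
    (hz : T.eval z ≠ x) :
    ruelle T (fun y => 1 / (z - y)) x = T.derivative.eval z / T.natDegree / (T.eval z - x) := by
  have hsplit : Splits (T - C x) := splits_iff_card_roots.mpr (by rwa [natDegree_sub_C])
  have h := hsplit.eval_derivative_div_eval_of_ne_zero (x := z) (by simpa [sub_eq_zero] using hz)
  rw [derivative_sub, derivative_C, sub_zero, eval_sub, eval_C] at h
  rw [ruelle_apply, ← h]
  ring

theorem exists_forall_lt_abs_eval (hT : 0 < T.degree) (M : ℝ) :
    ∃ c, ∀ z, c < |z| → M < |T.eval z| := by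
  have h := (T.tendsto_norm_atTop hT (l := comap (fun z : ℝ => ‖z‖) atTop) (z := id)
    tendsto_comap).eventually_gt_atTop M
  obtain ⟨c, hc⟩ := eventually_atTop.mp (eventually_comap.mp h)
  exact ⟨c, fun z hz => by simpa using hc |z| hz.le z rfl⟩

theorem exists_subset_Icc_forall_eval_notMem (hT : 0 < T.degree) {K : Set ℝ}
    (hK : Bornology.IsBounded K) :
    ∃ c, 0 ≤ c ∧ K ⊆ Icc (-c) c ∧ ∀ z, c < |z| → T.eval z ∉ K := by
  obtain ⟨M, hM, hKM⟩ := hK.subset_closedBall_lt 0 0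
  obtain ⟨c, hc⟩ := exists_forall_lt_abs_eval hT M
  have hKM' : ∀ x ∈ K, |x| ≤ M := fun x hx => by simpa using hKM hx
  refine ⟨max c M, hM.le.trans (le_max_right _ _),
    fun x hx => abs_le.mp ((hKM' x hx).trans (le_max_right _ _)), fun z hz hzK => ?_⟩
  exact (hKM' _ hzK).not_gt (hc z ((le_max_left _ _).trans_lt hz))

theorem mem_Icc_of_mem_roots {K : Set ℝ} {c : ℝ} (hc : ∀ z, c < |z| → T.eval z ∉ K)
    (hx : x ∈ K) {y : ℝ} (hy : y ∈ (T - C x).roots) : y ∈ Icc (-c) c := by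
  have hTy : T.eval y = x := by
    simpa [sub_eq_zero] using (mem_roots'.mp hy).2
  exact abs_le.mp (not_lt.mp fun h => hc y h (hTy ▸ hx))

theorem continuousOn_ruelle_one_div_sub_and_integral_eq {σ : Measure ℝ} {K : Set ℝ}
    (hKσ : σ Kᶜ = 0) (hK : ∀ x ∈ K, Multiset.card (T - C x).roots = T.natDegree) {z : ℝ}
    (hz : T.eval z ∉ K) :
    ContinuousOn (ruelle T fun y => 1 / (z - y)) K ∧
      ∫ x, ruelle T (fun y => 1 / (z - y)) x ∂σ =
        ∫ x, T.derivative.eval z / T.natDegree / (T.eval z - x) ∂σ := by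
  have hkernel : EqOn (ruelle T fun y => 1 / (z - y))
      (fun x => T.derivative.eval z / T.natDegree / (T.eval z - x)) K :=
    fun x hx => ruelle_one_div_sub (hK x hx) fun h => hz (h ▸ hx)
  have hae : ∀ᵐ x ∂σ, x ∈ K := mem_ae_iff.mpr hKσ
  refine ⟨ContinuousOn.congr ?_ hkernel, integral_congr_ae (hae.mono hkernel)⟩
  exact continuousOn_const.div (continuousOn_const.sub continuousOn_id)
    fun x hx h => hz (sub_eq_zero.mp h ▸ hx)

end Ruelle

open MeasureTheory Polynomial in
/-- Balanced measure as Ruelle eigenmeasure: a compactly supported probability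
measure `σ` on ℝ (supported on the real Julia set of `T`, where all preimages
are real) satisfies the Stieltjes-transform identity
`∫ (T'(z)/d)/(T(z) − x) dσ(x) = ∫ 1/(z − x) dσ(x)` near infinity if and only if
`σ` is invariant under the dual Ruelle operator:
`∫ (1/d) Σ_{T(y)=x} f(y) dσ(x) = ∫ f dσ` for every continuous `f`. -/
theorem stmt_17 (T : Polynomial ℝ) (d : ℕ) (hd : d = T.natDegree) (h2 : 2 ≤ d)
    (σ : Measure ℝ) [IsProbabilityMeasure σ]
    (K : Set ℝ) (hK : IsCompact K) (hKfull : σ Kᶜ = 0)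
    (hreal : ∀ x ∈ K, Multiset.card (T - Polynomial.C x).roots = d) :
    (∃ R : ℝ, ∀ z : ℝ, R < |z| →
        ∫ x, (T.derivative.eval z / d) / (T.eval z - x) ∂σ = ∫ x, 1 / (z - x) ∂σ)
    ↔ (∀ f : ℝ → ℝ, Continuous f →
        ∫ x, (1 / d : ℝ) * (((T - Polynomial.C x).roots.map f).sum) ∂σ = ∫ x, f x ∂σ) := by
  subst hd
  obtain ⟨c, hc, hKc, hesc⟩ := exists_subset_Icc_forall_eval_notMem
    (natDegree_pos_iff_degree_pos.mp (by omega : 0 < T.natDegree)) hK.isBounded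
  have hL : SupBoundedOn (ruelle T) (Icc (-c) c) K :=
    fun x hx _ _ hM hf => abs_ruelle_le hM fun y hy => hf y (mem_Icc_of_mem_roots hesc hx hy)
  have hcauchy : ∀ z, c < |z| → _ := fun z hz =>
    continuousOn_ruelle_one_div_sub_and_integral_eq (σ := σ) hKfull hreal (hesc z hz)
  constructor
  · rintro ⟨R, hR⟩ f hf
    refine (continuousOn_and_integral_eq_of_integral_one_div_sub_eq (by linarith) hK hKfull hKc
      hL (fun x hx => ruelle_one (hreal x hx) (by omega)) (R := max R c) (fun z hz => ?_) hf).2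
    have hz' : max R c < |z| := hz.trans_le (le_abs_self z)
    obtain ⟨hcont, hint⟩ := hcauchy z ((le_max_right R c).trans_lt hz')
    exact ⟨hcont, hint.trans (hR z ((le_max_left R c).trans_lt hz'))⟩
  · intro h
    refine ⟨c, fun z hz => (hcauchy z hz).2.symm.trans ?_⟩
    exact integral_one_div_sub_eq_of_forall_integral_eq hKfull (by linarith) hKc hL h
      fun hzI => (abs_le.mpr hzI).not_gt hz
end
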